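/- arXiv:1404.4686 — 3 statements merged into one kernel-verified Lean document; each statement's English description precedes it below -/
import Mathlib

section
/- Let H₁, H₂ be complex Hilbert spaces, D₁ ⊆ H₁ and D₂ ⊆ H₂ dense linear subspaces, and L₀ : D₁ → H₂, M₀ : D₂ → H₁ linear operators satisfying ⟨L₀u, v⟩_{H₂} = ⟨u, M₀v⟩_{H₁} for all u ∈ D₁, v ∈ D₂; let L and M denote the closures of L₀ and M₀. Then the equalities M = L* and L = M* hold if and only if ker(I_{H₂} + M*L*) = {0} and ker(I_{H₁} + L*M*) = {0}. -/
/-!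
Formal adjointness gives `M ⊆ L*` and `L ⊆ M*`. If `M = L*`, then
`⟪w + M* L* w, w⟫ = ‖w‖² + ‖L* w‖²`, so `I + M* L*` is injective, and symmetrically.
Conversely, as `M` is closed, `H₂ × H₁` splits orthogonally as `graph M ⊕ {(-M* v, v)}`.
Writing `(w, L* w) = (u, M u) + (-M* v, v)` and using `M ⊆ L*` gives `v + L* M* v = 0`,
hence `v = 0` and `L* ⊆ M`.
-/

open scoped InnerProductSpace
open WithLp

namespace LinearPMap

variable {𝕜 E F : Type*} [RCLike 𝕜]
  [NormedAddCommGroup E] [InnerProductSpace 𝕜 E]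
  [NormedAddCommGroup F] [InnerProductSpace 𝕜 F]

theorem IsFormalAdjoint.mono {T T' : E →ₗ.[𝕜] F} {S : F →ₗ.[𝕜] E}
    (h : T.IsFormalAdjoint S) (hle : T' ≤ T) : T'.IsFormalAdjoint S := fun x y => by
  rw [← h ⟨x, hle.1 x.2⟩ y, hle.2 (x := x) (y := ⟨x, hle.1 x.2⟩) rfl]

theorem IsClosed.closure_eq {T : E →ₗ.[𝕜] F} (hT : T.IsClosed) : T.closure = T :=
  eq_of_eq_graph <| by
    rw [← hT.isClosable.graph_closure_eq_closure_graph, hT.submodule_topologicalClosure_eq]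

section

variable [CompleteSpace E]

theorem IsFormalAdjoint.isClosable {T : E →ₗ.[𝕜] F} {S : F →ₗ.[𝕜] E}
    (hT : Dense (T.domain : Set E)) (h : T.IsFormalAdjoint S) : S.IsClosable :=
  (adjoint_isClosed hT).isClosable.leIsClosable (h.le_adjoint hT)

theorem IsFormalAdjoint.closure_le_adjoint {T : E →ₗ.[𝕜] F} {S : F →ₗ.[𝕜] E}
    (hT : Dense (T.domain : Set E)) (h : T.IsFormalAdjoint S) : S.closure ≤ T† := by
  have hTc := adjoint_isClosed hT
  simpa only [hTc.closure_eq] using hTc.isClosable.closure_mono (h.le_adjoint hT)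

/-- `T.closure ≤ S†` makes `T.closure` a formal adjoint of `S`. -/
theorem IsFormalAdjoint.closure_le_adjoint_closure [CompleteSpace F]
    {T : E →ₗ.[𝕜] F} {S : F →ₗ.[𝕜] E}
    (hT : Dense (T.domain : Set E)) (hS : Dense (S.domain : Set F))
    (h : T.IsFormalAdjoint S) : S.closure ≤ T.closure† :=
  ((adjoint_isFormalAdjoint hS).mono (h.symm.closure_le_adjoint hS)).closure_le_adjoint
    (hT.mono T.le_closure.1)

end

section

variable [CompleteSpace F]

theorem mem_adjoint_graph_of_mem_orthogonal_graph {R : F →ₗ.[𝕜] E}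
    (hR : Dense (R.domain : Set F)) {z : WithLp 2 (F × E)}
    (hz : z ∈ (R.graph.comap (WithLp.linearEquiv 2 𝕜 (F × E)).toLinearMap)ᗮ) :
    ((ofLp z).2, -(ofLp z).1) ∈ R†.graph := by
  rw [adjoint_graph_eq_graph_adjoint hR, Submodule.mem_adjoint_iff]
  intro a b hab
  have := (Submodule.mem_orthogonal _ _).1 hz (toLp 2 (a, b)) hab
  rw [prod_inner_apply] at this
  simpa [sub_eq_add_neg, add_comm] using this

/-- Von Neumann's decomposition `F × E = graph R ⊕ {(-R† v, v)}`, the second summand being the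
orthogonal complement of the graph of `R` in the `L²` product. -/
theorem exists_eq_sub_adjoint_and_eq_add [CompleteSpace E] {R : F →ₗ.[𝕜] E}
    (hR : Dense (R.domain : Set F)) (hRc : R.IsClosed) (x : F) (y : E) :
    ∃ (u : R.domain) (v : R†.domain), x = u - R† v ∧ y = R u + v := by
  set K := R.graph.comap (WithLp.linearEquiv 2 𝕜 (F × E)).toLinearMap
  have hK : _root_.IsClosed (K : Set (WithLp 2 (F × E))) :=
    hRc.preimage (WithLp.prodContinuousLinearEquiv 2 𝕜 F E).continuous
  have : CompleteSpace K := hK.completeSpace_coe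
  obtain ⟨a, ha, b, hb, hab⟩ := K.exists_add_mem_mem_orthogonal (toLp 2 (x, y))
  obtain ⟨u, hu₁, hu₂⟩ := (mem_graph_iff R).1 ha
  obtain ⟨v, hv₁, hv₂⟩ := (mem_graph_iff _).1 (mem_adjoint_graph_of_mem_orthogonal_graph hR hb)
  refine ⟨u, v, ?_, ?_⟩
  · simpa [hu₁, hv₂] using congrArg (fun p => (ofLp p).1) hab
  · simpa [hu₂, hv₁] using congrArg (fun p => (ofLp p).2) hab

/-- `I + R† T` is injective for `T ≤ R`, since `⟪w + R† T w, w⟫ = ‖w‖² + ‖T w‖²`. -/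
theorem eq_zero_of_add_adjoint_apply_eq_zero {T R : F →ₗ.[𝕜] E}
    (hR : Dense (R.domain : Set F)) (hle : T ≤ R) (w : T.domain)
    (hw : (T w : E) ∈ R†.domain) (h : (w : F) + R† ⟨T w, hw⟩ = 0) : (w : F) = 0 := by
  have hTw : ⟪R† ⟨T w, hw⟩, (w : F)⟫_𝕜 = ⟪(T w : E), T w⟫_𝕜 := by
    rw [adjoint_isFormalAdjoint hR ⟨T w, hw⟩ ⟨w, hle.1 w.2⟩,
      ← hle.2 (x := w) (y := ⟨w, hle.1 w.2⟩) rfl]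
  have hsum : ‖(w : F)‖ ^ 2 + ‖T w‖ ^ 2 = 0 := by
    simpa [inner_add_left, hTw, inner_self_eq_norm_sq] using
      congrArg (fun z => RCLike.re ⟪z, (w : F)⟫_𝕜) h
  simpa using ((add_eq_zero_iff_of_nonneg (sq_nonneg _) (sq_nonneg _)).1 hsum).1

theorem adjoint_le_of_ker_trivial [CompleteSpace E] {T : E →ₗ.[𝕜] F} {R : F →ₗ.[𝕜] E}
    (hR : Dense (R.domain : Set F)) (hRc : R.IsClosed) (hle : R ≤ T†)
    (hker : ∀ (v : R†.domain) (hv : (R† v : F) ∈ T†.domain),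
      (v : E) + T† ⟨R† v, hv⟩ = 0 → (v : E) = 0) :
    T† ≤ R := by
  refine le_of_le_graph fun ⟨x, y⟩ hp => ?_
  obtain ⟨w, rfl, rfl⟩ := (mem_graph_iff _).1 hp
  obtain ⟨u, v, hwu, hTw⟩ := exists_eq_sub_adjoint_and_eq_add hR hRc w (T† w)
  have hRv : (R† v : F) = u - w := by rw [hwu]; abel
  have hRv_mem : (R† v : F) ∈ T†.domain := hRv ▸ sub_mem (hle.1 u.2) w.2
  have hv : v = 0 := by
    refine Subtype.ext (hker v hRv_mem ?_)
    have : T† ⟨R† v, hRv_mem⟩ = T† ⟨u, hle.1 u.2⟩ - T† w := by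
      rw [← map_sub]
      exact congrArg _ (Subtype.ext hRv)
    rw [this, ← hle.2 rfl, hTw]
    abel
  subst hv
  refine (mem_graph_iff _).2 ⟨u, ?_, ?_⟩ <;> simp [hwu, hTw]

end

end LinearPMap

open LinearPMap in
/-- Let `L₀ : D₁ → H₂`, `M₀ : D₂ → H₁` be densely defined operators with
`⟪L₀ u, v⟫ = ⟪u, M₀ v⟫` for all `u ∈ D₁`, `v ∈ D₂`, and let `L`, `M` be their closures.
Then `M = L*` and `L = M*` hold if and only if `ker (I_{H₂} + M* L*) = {0}` and
`ker (I_{H₁} + L* M*) = {0}`; here the compositions have their natural domains, e.g.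
`dom (M* L*) = {w ∈ dom L* : L* w ∈ dom M*}`, so triviality of `ker (I + M* L*)` is expressed
as: for `w ∈ dom L*` with `L* w ∈ dom M*` and `w + M*(L* w) = 0`, one has `w = 0`. -/
theorem stmt_4
    {H₁ H₂ : Type*}
    [NormedAddCommGroup H₁] [InnerProductSpace ℂ H₁] [CompleteSpace H₁]
    [NormedAddCommGroup H₂] [InnerProductSpace ℂ H₂] [CompleteSpace H₂]
    (L₀ : H₁ →ₗ.[ℂ] H₂) (M₀ : H₂ →ₗ.[ℂ] H₁)
    (hL₀ : Dense (L₀.domain : Set H₁)) (hM₀ : Dense (M₀.domain : Set H₂))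
    (h : ∀ (u : L₀.domain) (v : M₀.domain), ⟪L₀ u, (v : H₂)⟫_ℂ = ⟪(u : H₁), M₀ v⟫_ℂ)
    (L : H₁ →ₗ.[ℂ] H₂) (M : H₂ →ₗ.[ℂ] H₁)
    (hL : L = L₀.closure) (hM : M = M₀.closure) :
    (M = L.adjoint ∧ L = M.adjoint) ↔
      ((∀ (w : L.adjoint.domain) (hw : (L.adjoint w : H₁) ∈ M.adjoint.domain),
          (w : H₂) + M.adjoint ⟨L.adjoint w, hw⟩ = 0 → (w : H₂) = 0) ∧
       (∀ (w : M.adjoint.domain) (hw : (M.adjoint w : H₂) ∈ L.adjoint.domain),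
          (w : H₁) + L.adjoint ⟨M.adjoint w, hw⟩ = 0 → (w : H₁) = 0)) := by
  subst hL hM
  replace h : L₀.IsFormalAdjoint M₀ := h
  have hL : Dense (L₀.closure.domain : Set H₁) := hL₀.mono L₀.le_closure.1
  have hM : Dense (M₀.closure.domain : Set H₂) := hM₀.mono M₀.le_closure.1
  have hMLa : M₀.closure ≤ L₀.closure† := h.closure_le_adjoint_closure hL₀ hM₀
  have hLMa : L₀.closure ≤ M₀.closure† := h.symm.closure_le_adjoint_closure hM₀ hL₀
  constructor
  · rintro ⟨hML, hLM⟩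
    exact ⟨fun w => eq_zero_of_add_adjoint_apply_eq_zero hM hML.symm.le w,
      fun w => eq_zero_of_add_adjoint_apply_eq_zero hL hLM.symm.le w⟩
  · rintro ⟨hker₂, hker₁⟩
    exact ⟨hMLa.antisymm <| adjoint_le_of_ker_trivial hM
        ((h.isClosable hL₀).closure_isClosed) hMLa hker₁,
      hLMa.antisymm <| adjoint_le_of_ker_trivial hL
        ((h.symm.isClosable hM₀).closure_isClosed) hLMa hker₂⟩
end

section
/- Let (V,E,c) be a connected network. Define, for x, y ∈ V, the resistance distance d_c(x,y) = sup{ |u(x) − u(y)|² : u : V → ℝ has finite energy and E_c(u,u) ≤ 1 }. Then d_c is a metric on V: d_c(x,y) is finite for all x,y; d_c(x,y) = d_c(y,x); d_c(x,y) = 0 if and only if x = y; and d_c(x,y) ≤ d_c(x,z) + d_c(z,y) for all x, y, z ∈ V. -/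
/-!
Summing the energy along a path gives `(u x - u y)² ≤ K E(u)`, which bounds `d_c` and makes
minimal energies positive. For `x ≠ y` the energy has a minimizer `v` among finite-energy functions
with `v x = 1`, `v y = 0`: truncate a minimizing sequence to `[0, 1]`, take a pointwise cluster
point (Tychonoff) and use lower semicontinuity of the energy. Varying `v` gives the reproducing
identity `E(v, f) = (f x - f y) E(v)`, whence `d_c(x, y) = 1 / E(v)`. The triangle inequality
follows by applying the identity to the minimizers of two pairs, using `0 ≤ v ≤ 1`.
-/

/-- An (infinite) electrical network: a countable graph `(V, E)` in which every vertex has a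
finite, nonempty set of neighbors, no self-loops, together with a symmetric positive conductance
function `c` on the edges (extended by `0` off the edge set). -/
structure Network (V : Type*) where
  adj : V → V → Prop
  adj_symm : ∀ x y, adj x y ↔ adj y x
  adj_irrefl : ∀ x, ¬ adj x x
  nbhd_finite : ∀ x, {y | adj x y}.Finite
  nbhd_nonempty : ∀ x, ∃ y, adj x y
  c : V → V → ℝ
  c_pos : ∀ x y, adj x y → 0 < c x y
  c_symm : ∀ x y, c x y = c y x
  c_eq_zero : ∀ x y, ¬ adj x y → c x y = 0

namespace Network

variable {V : Type*}

/-- The graph Laplacian `(Δu)(x) = ∑_{y ~ x} c x y (u x − u y)`; the sum has only finitely many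
nonzero terms since `c x y = 0` unless `y` is one of the finitely many neighbors of `x`. -/
noncomputable def lap (N : Network V) (u : V → ℂ) (x : V) : ℂ :=
  ∑' y : V, (N.c x y : ℂ) * (u x - u y)

/-- The (sesquilinear) energy form
`E_c(u, v) = (1/2) ∑_{(x,y)} c x y (conj (u x) − conj (u y)) (v x − v y)`. -/
noncomputable def energy (N : Network V) (u v : V → ℂ) : ℂ :=
  (1 / 2) * ∑' p : V × V,
    (N.c p.1 p.2 : ℂ) * (starRingEnd ℂ (u p.1) - starRingEnd ℂ (u p.2)) * (v p.1 - v p.2)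

/-- `u : V → ℂ` has finite energy if `∑_{(x,y)} c x y |u x − u y|²` is summable. -/
def FiniteEnergy (N : Network V) (u : V → ℂ) : Prop :=
  Summable fun p : V × V => N.c p.1 p.2 * ‖u p.1 - u p.2‖ ^ 2

/-- The quadratic energy `E_c(u, u) = (1/2) ∑_{(x,y)} c x y |u x − u y|²` as a real number. -/
noncomputable def energySq (N : Network V) (u : V → ℂ) : ℝ :=
  (1 / 2) * ∑' p : V × V, N.c p.1 p.2 * ‖u p.1 - u p.2‖ ^ 2

/-- The graph Laplacian acting on real-valued functions. -/
noncomputable def lapR (N : Network V) (u : V → ℝ) (x : V) : ℝ :=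
  ∑' y : V, N.c x y * (u x - u y)

/-- The real energy form `E_c(u, v) = (1/2) ∑_{(x,y)} c x y (u x − u y)(v x − v y)`. -/
noncomputable def energyR (N : Network V) (u v : V → ℝ) : ℝ :=
  (1 / 2) * ∑' p : V × V, N.c p.1 p.2 * (u p.1 - u p.2) * (v p.1 - v p.2)

/-- The network is connected: any two vertices are joined by a finite path of edges. -/
def Connected (N : Network V) : Prop :=
  ∀ x y : V, ∃ (n : ℕ) (p : ℕ → V), p 0 = x ∧ p n = y ∧ ∀ i < n, N.adj (p i) (p (i + 1))

end Network

/-- The set of values `|u(x) − u(y)|²` over real-valued finite-energy functions `u` with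
`E_c(u, u) ≤ 1`; the resistance distance `d_c(x, y)` is its supremum. -/
def Network.distSet {V : Type*} (N : Network V) (x y : V) : Set ℝ :=
  {r : ℝ | ∃ u : V → ℝ,
    Summable (fun p : V × V => N.c p.1 p.2 * (u p.1 - u p.2) ^ 2) ∧
    N.energyR u u ≤ 1 ∧ r = (u x - u y) ^ 2}

/-- The resistance distance `d_c(x,y) = sup {|u(x) − u(y)|² : u of finite energy, E_c(u,u) ≤ 1}`. -/
noncomputable def Network.dc {V : Type*} (N : Network V) (x y : V) : ℝ :=
  sSup (N.distSet x y)

open Filter Topology Set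

namespace Network

variable {V : Type*} (N : Network V)

def FiniteEnergyR (u : V → ℝ) : Prop :=
  Summable fun p : V × V => N.c p.1 p.2 * (u p.1 - u p.2) ^ 2

structure IsEnergyMinimizer (x y : V) (v : V → ℝ) : Prop where
  finiteEnergyR : N.FiniteEnergyR v
  apply_left : v x = 1
  apply_right : v y = 0
  le : ∀ u, N.FiniteEnergyR u → u x = 1 → u y = 0 → N.energyR v v ≤ N.energyR u u

lemma c_nonneg (x y : V) : 0 ≤ N.c x y := by
  by_cases h : N.adj x y
  · exact (N.c_pos x y h).le
  · exact (N.c_eq_zero x y h).ge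

lemma c_mul_sq_nonneg (u : V → ℝ) (p : V × V) : 0 ≤ N.c p.1 p.2 * (u p.1 - u p.2) ^ 2 :=
  mul_nonneg (N.c_nonneg _ _) (sq_nonneg _)

lemma energyR_comm (u v : V → ℝ) : N.energyR u v = N.energyR v u := by
  unfold energyR
  congr 1
  exact tsum_congr fun p => by ring

lemma energyR_self (u : V → ℝ) :
    N.energyR u u = (∑' p : V × V, N.c p.1 p.2 * (u p.1 - u p.2) ^ 2) / 2 := by
  rw [energyR, tsum_congr fun p : V × V => (by ring :
    N.c p.1 p.2 * (u p.1 - u p.2) * (u p.1 - u p.2) = N.c p.1 p.2 * (u p.1 - u p.2) ^ 2)]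
  ring

lemma energyR_self_nonneg (u : V → ℝ) : 0 ≤ N.energyR u u := by
  rw [energyR_self]
  exact div_nonneg (tsum_nonneg (N.c_mul_sq_nonneg u)) zero_le_two

lemma c_mul_sq_sub_le_energyR {u : V → ℝ} (hu : N.FiniteEnergyR u) (x y : V) :
    N.c x y * (u x - u y) ^ 2 ≤ 2 * N.energyR u u := by
  rw [energyR_self, mul_div_cancel₀ _ two_ne_zero]
  exact hu.le_tsum (x, y) fun p _ => N.c_mul_sq_nonneg u p

lemma finiteEnergyR_single [DecidableEq V] (x : V) : N.FiniteEnergyR (Pi.single x 1) := by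
  refine summable_of_hasFiniteSupport <| show Set.Finite _ from
    (((N.nbhd_finite x).image fun y => (x, y)).union
      ((N.nbhd_finite x).image fun y => (y, x))).subset ?_
  rintro ⟨a, b⟩ hp
  have hab : N.adj a b := by
    by_contra h
    simp [N.c_eq_zero _ _ h] at hp
  by_cases ha : a = x
  · exact .inl ⟨b, ha ▸ hab, by simp [ha]⟩
  by_cases hb : b = x
  · exact .inr ⟨a, (N.adj_symm _ _).1 (hb ▸ hab), by simp [hb]⟩
  simp [Pi.single_apply, ha, hb] at hp

namespace FiniteEnergyR

variable {N}

lemma summable_mul {u v : V → ℝ} (hu : N.FiniteEnergyR u) (hv : N.FiniteEnergyR v) :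
    Summable fun p : V × V => N.c p.1 p.2 * (u p.1 - u p.2) * (v p.1 - v p.2) := by
  refine ((hu.add hv).div_const 2).of_norm_bounded fun p => ?_
  have hc := N.c_nonneg p.1 p.2
  have := two_mul_le_add_sq |u p.1 - u p.2| |v p.1 - v p.2|
  rw [Real.norm_eq_abs, mul_assoc, abs_mul, abs_of_nonneg hc, abs_mul, sq_abs, sq_abs] at *
  nlinarith

lemma comb {f g : V → ℝ} (hf : N.FiniteEnergyR f) (hg : N.FiniteEnergyR g) (a b k : ℝ) :
    N.FiniteEnergyR fun z => a * f z + b * g z + k := by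
  refine .of_nonneg_of_le (N.c_mul_sq_nonneg fun z => a * f z + b * g z + k) (fun p => ?_)
    ((hf.mul_left (2 * a ^ 2)).add (hg.mul_left (2 * b ^ 2)))
  have hc := N.c_nonneg p.1 p.2
  have : (a * f p.1 + b * g p.1 + k - (a * f p.2 + b * g p.2 + k)) ^ 2 ≤
      2 * a ^ 2 * (f p.1 - f p.2) ^ 2 + 2 * b ^ 2 * (g p.1 - g p.2) ^ 2 := by
    nlinarith [sq_nonneg (a * (f p.1 - f p.2) - b * (g p.1 - g p.2))]
  nlinarith

lemma of_sq_sub_le {u v : V → ℝ} (hu : N.FiniteEnergyR u)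
    (h : ∀ a b, (v a - v b) ^ 2 ≤ (u a - u b) ^ 2) : N.FiniteEnergyR v :=
  .of_nonneg_of_le (N.c_mul_sq_nonneg v)
    (fun p => mul_le_mul_of_nonneg_left (h p.1 p.2) (N.c_nonneg _ _)) hu

end FiniteEnergyR

lemma energyR_self_le_of_sq_sub_le {u v : V → ℝ} (hu : N.FiniteEnergyR u)
    (h : ∀ a b, (v a - v b) ^ 2 ≤ (u a - u b) ^ 2) : N.energyR v v ≤ N.energyR u u := by
  rw [energyR_self, energyR_self]
  exact div_le_div_of_nonneg_right ((hu.of_sq_sub_le h).tsum_le_tsum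
    (fun p => mul_le_mul_of_nonneg_left (h p.1 p.2) (N.c_nonneg _ _)) hu) zero_le_two

lemma energyR_comb_right {u f g : V → ℝ} (hu : N.FiniteEnergyR u) (hf : N.FiniteEnergyR f)
    (hg : N.FiniteEnergyR g) (a b k : ℝ) :
    N.energyR u (fun z => a * f z + b * g z + k) = a * N.energyR u f + b * N.energyR u g := by
  have hsplit : ∀ p : V × V, N.c p.1 p.2 * (u p.1 - u p.2) *
      (a * f p.1 + b * g p.1 + k - (a * f p.2 + b * g p.2 + k)) =
        a * (N.c p.1 p.2 * (u p.1 - u p.2) * (f p.1 - f p.2)) +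
          b * (N.c p.1 p.2 * (u p.1 - u p.2) * (g p.1 - g p.2)) := fun p => by ring
  simp only [energyR]
  rw [tsum_congr hsplit, ((hu.summable_mul hf).mul_left a).tsum_add
    ((hu.summable_mul hg).mul_left b), tsum_mul_left, tsum_mul_left]
  ring

lemma energyR_comb_self {f g : V → ℝ} (hf : N.FiniteEnergyR f) (hg : N.FiniteEnergyR g)
    (a b k : ℝ) :
    N.energyR (fun z => a * f z + b * g z + k) (fun z => a * f z + b * g z + k) =
      a ^ 2 * N.energyR f f + 2 * a * b * N.energyR f g + b ^ 2 * N.energyR g g := by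
  rw [N.energyR_comb_right (hf.comb hg a b k) hf hg, N.energyR_comm _ f, N.energyR_comm _ g,
    N.energyR_comb_right hf hf hg, N.energyR_comb_right hg hf hg, N.energyR_comm g f]
  ring

lemma sq_sub_le_of_adj {x y : V} (hxy : N.adj x y) {u : V → ℝ} (hu : N.FiniteEnergyR u) :
    (u x - u y) ^ 2 ≤ 2 / N.c x y * N.energyR u u := by
  have hc := N.c_pos x y hxy
  rw [div_mul_eq_mul_div, le_div_iff₀ hc, mul_comm]
  exact N.c_mul_sq_sub_le_energyR hu x y

lemma exists_sq_sub_le_mul_energyR (hconn : N.Connected) (x y : V) :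
    ∃ K, 0 ≤ K ∧ ∀ u, N.FiniteEnergyR u → (u x - u y) ^ 2 ≤ K * N.energyR u u := by
  obtain ⟨n, p, rfl, rfl, hp⟩ := hconn x y
  suffices ∀ k ≤ n, ∃ K, 0 ≤ K ∧ ∀ u, N.FiniteEnergyR u →
      (u (p 0) - u (p k)) ^ 2 ≤ K * N.energyR u u from this n le_rfl
  intro k hk
  induction k with
  | zero => exact ⟨0, le_rfl, fun u _ => by simp⟩
  | succ k ih =>
    obtain ⟨K, hK, hKu⟩ := ih (by omega)
    have hadj := hp k (by omega)
    have hc := N.c_pos _ _ hadj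
    refine ⟨2 * K + 2 * (2 / N.c (p k) (p (k + 1))), by positivity, fun u hu => ?_⟩
    have h₁ := hKu u hu
    have h₂ := N.sq_sub_le_of_adj hadj hu
    nlinarith [sq_nonneg (u (p 0) - u (p k) - (u (p k) - u (p (k + 1))))]

lemma finiteEnergyR_and_energyR_le_of_tendsto {ι : Type*} {l : Filter ι} [l.NeBot]
    {u : ι → V → ℝ} {v : V → ℝ} {e : ι → ℝ} {M : ℝ} (hu : Tendsto u l (𝓝 v))
    (hfin : ∀ i, N.FiniteEnergyR (u i)) (he : ∀ i, N.energyR (u i) (u i) ≤ e i)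
    (hM : Tendsto e l (𝓝 M)) :
    N.FiniteEnergyR v ∧ N.energyR v v ≤ M := by
  have hsum : ∀ s : Finset (V × V), ∑ p ∈ s, N.c p.1 p.2 * (v p.1 - v p.2) ^ 2 ≤ 2 * M := by
    intro s
    have hcont : Continuous fun w : V → ℝ => ∑ p ∈ s, N.c p.1 p.2 * (w p.1 - w p.2) ^ 2 := by
      fun_prop
    refine le_of_tendsto_of_tendsto ((hcont.tendsto v).comp hu) (hM.const_mul 2)
      (Eventually.of_forall fun i => ?_)
    calc ∑ p ∈ s, N.c p.1 p.2 * (u i p.1 - u i p.2) ^ 2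
        ≤ ∑' p : V × V, N.c p.1 p.2 * (u i p.1 - u i p.2) ^ 2 :=
          (hfin i).sum_le_tsum s fun p _ => N.c_mul_sq_nonneg _ p
      _ = 2 * N.energyR (u i) (u i) := by rw [energyR_self]; ring
      _ ≤ 2 * e i := by linarith [he i]
  have hv : N.FiniteEnergyR v := summable_of_sum_le (N.c_mul_sq_nonneg v) hsum
  refine ⟨hv, ?_⟩
  rw [energyR_self]
  linarith [hv.tsum_le_of_sum_le hsum]

lemma exists_isEnergyMinimizer {x y : V} (hxy : x ≠ y) :
    ∃ v, N.IsEnergyMinimizer x y v ∧ ∀ z, v z ∈ Icc (0 : ℝ) 1 := by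
  classical
  set A := {r | ∃ u, N.FiniteEnergyR u ∧ u x = 1 ∧ u y = 0 ∧ N.energyR u u = r}
  have hA : A.Nonempty :=
    ⟨_, Pi.single x 1, N.finiteEnergyR_single x, by simp, by simp [hxy.symm], rfl⟩
  have hAbdd : BddBelow A := ⟨0, by rintro _ ⟨u, -, -, -, rfl⟩; exact N.energyR_self_nonneg u⟩
  obtain ⟨e, -, he, heA⟩ := exists_seq_tendsto_sInf hA hAbdd
  choose u hu hux huy hue using heA
  set w : ℕ → V → ℝ := fun n z => projIcc 0 1 zero_le_one (u n z)
  have hw_sq : ∀ n a b, (w n a - w n b) ^ 2 ≤ (u n a - u n b) ^ 2 := fun n a b =>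
    sq_le_sq.mpr (abs_projIcc_sub_projIcc zero_le_one)
  have hwK : ∀ n, w n ∈ univ.pi fun _ => Icc (0 : ℝ) 1 := fun n z _ => Subtype.prop _
  set 𝒰 := Ultrafilter.of (atTop : Filter ℕ)
  obtain ⟨v, hvK, hv⟩ := (isCompact_univ_pi fun _ => isCompact_Icc).ultrafilter_le_nhds
    (𝒰.map w) (le_principal_iff.mpr (Ultrafilter.mem_map.mpr (univ_mem' hwK)))
  replace hv : Tendsto w 𝒰 (𝓝 v) := hv
  obtain ⟨hvfin, hvE⟩ := N.finiteEnergyR_and_energyR_le_of_tendsto hv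
    (fun n => (hu n).of_sq_sub_le (hw_sq n))
    (fun n => (N.energyR_self_le_of_sq_sub_le (hu n) (hw_sq n)).trans (hue n).le)
    (he.mono_left (Ultrafilter.of_le _))
  have hval : ∀ z c, (∀ n, w n z = c) → v z = c := fun z c hc =>
    tendsto_nhds_unique (((continuous_apply z).tendsto v).comp hv)
      (by simp only [Function.comp_def, hc]; exact tendsto_const_nhds)
  refine ⟨v, ⟨hvfin, hval x 1 fun n => ?_, hval y 0 fun n => ?_, fun u' hu' hx hy => ?_⟩,
    fun z => hvK z (mem_univ z)⟩
  · simp [w, hux n]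
  · simp [w, huy n]
  · exact hvE.trans (csInf_le hAbdd ⟨u', hu', hx, hy, rfl⟩)

namespace IsEnergyMinimizer

variable {N} {x y : V} {v : V → ℝ}

lemma energyR_eq_zero (hv : N.IsEnergyMinimizer x y v) {g : V → ℝ} (hg : N.FiniteEnergyR g)
    (hgx : g x = 0) (hgy : g y = 0) : N.energyR v g = 0 := by
  have hquad : ∀ t, 0 ≤ N.energyR g g * (t * t) + 2 * N.energyR v g * t + 0 := fun t => by
    have := hv.le _ (hv.finiteEnergyR.comb hg 1 t 0) (by simp [hv.apply_left, hgx])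
      (by simp [hv.apply_right, hgy])
    rw [N.energyR_comb_self hv.finiteEnergyR hg] at this
    linarith
  have := discrim_le_zero hquad
  rw [discrim] at this
  nlinarith [sq_nonneg (N.energyR v g)]

lemma energyR_eq (hv : N.IsEnergyMinimizer x y v) {f : V → ℝ} (hf : N.FiniteEnergyR f) :
    N.energyR v f = (f x - f y) * N.energyR v v := by
  have := hv.energyR_eq_zero (hf.comb hv.finiteEnergyR 1 (-(f x - f y)) (-f y))
    (by simp [hv.apply_left]) (by simp [hv.apply_right])
  rw [N.energyR_comb_right hv.finiteEnergyR hf hv.finiteEnergyR] at this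
  linarith

lemma reciprocity (hv : N.IsEnergyMinimizer x y v) {x' y' : V} {w : V → ℝ}
    (hw : N.IsEnergyMinimizer x' y' w) :
    (v x' - v y') * N.energyR w w = (w x - w y) * N.energyR v v := by
  rw [← hw.energyR_eq hv.finiteEnergyR, ← hv.energyR_eq hw.finiteEnergyR, N.energyR_comm]

lemma sq_sub_mul_energyR_le (hv : N.IsEnergyMinimizer x y v) {u : V → ℝ}
    (hu : N.FiniteEnergyR u) :
    (u x - u y) ^ 2 * N.energyR v v ≤ N.energyR u u := by
  have := N.energyR_self_nonneg fun z => 1 * u z + -(u x - u y) * v z + 0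
  rw [N.energyR_comb_self hu hv.finiteEnergyR, N.energyR_comm u v, hv.energyR_eq hu] at this
  linarith

lemma energyR_pos (hv : N.IsEnergyMinimizer x y v) (hconn : N.Connected) :
    0 < N.energyR v v := by
  obtain ⟨K, -, hK⟩ := N.exists_sq_sub_le_mul_energyR hconn x y
  have := hK v hv.finiteEnergyR
  rw [hv.apply_left, hv.apply_right] at this
  refine (N.energyR_self_nonneg v).lt_of_ne fun h => ?_
  rw [← h] at this
  norm_num at this

end IsEnergyMinimizer

lemma zero_mem_distSet (x y : V) : (0 : ℝ) ∈ N.distSet x y :=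
  ⟨0, by simp, by simp [energyR], by simp⟩

lemma distSet_comm (x y : V) : N.distSet x y = N.distSet y x := by
  ext r
  constructor <;> rintro ⟨u, hu, hE, rfl⟩ <;> exact ⟨u, hu, hE, by ring⟩

lemma distSet_self (x : V) : N.distSet x x = {0} :=
  Subset.antisymm (by rintro _ ⟨u, -, -, rfl⟩; simp)
    (singleton_subset_iff.mpr (N.zero_mem_distSet x x))

lemma bddAbove_distSet (hconn : N.Connected) (x y : V) : BddAbove (N.distSet x y) := by
  obtain ⟨K, hK, hKu⟩ := N.exists_sq_sub_le_mul_energyR hconn x y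
  refine ⟨K, ?_⟩
  rintro _ ⟨u, hu, hE, rfl⟩
  nlinarith [hKu u hu]

lemma dc_comm (x y : V) : N.dc x y = N.dc y x := by
  rw [dc, dc, distSet_comm]

lemma dc_self (x : V) : N.dc x x = 0 := by
  rw [dc, distSet_self, csSup_singleton]

lemma dc_nonneg (hconn : N.Connected) (x y : V) : 0 ≤ N.dc x y :=
  le_csSup (N.bddAbove_distSet hconn x y) (N.zero_mem_distSet x y)

variable {N} in
lemma IsEnergyMinimizer.dc_eq (hconn : N.Connected) {x y : V} {v : V → ℝ}
    (hv : N.IsEnergyMinimizer x y v) : N.dc x y = (N.energyR v v)⁻¹ := by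
  have hpos := hv.energyR_pos hconn
  refine le_antisymm (csSup_le ⟨0, N.zero_mem_distSet x y⟩ ?_) ?_
  · rintro _ ⟨u, hu, hE, rfl⟩
    rw [← one_div, le_div_iff₀ hpos]
    exact (hv.sq_sub_mul_energyR_le hu).trans hE
  · have hs : 0 ≤ (N.energyR v v)⁻¹ := inv_nonneg.mpr hpos.le
    have hmem : (N.energyR v v)⁻¹ ∈ N.distSet x y := by
      refine ⟨fun z => √(N.energyR v v)⁻¹ * v z + 0 * v z + 0, ?_, ?_, ?_⟩
      · exact hv.finiteEnergyR.comb hv.finiteEnergyR _ 0 0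
      · rw [N.energyR_comb_self hv.finiteEnergyR hv.finiteEnergyR, Real.sq_sqrt hs]
        simp [hpos.ne']
      · simp [hv.apply_left, hv.apply_right, Real.sq_sqrt hpos.le]
    exact le_csSup (N.bddAbove_distSet hconn x y) hmem

lemma dc_pos (hconn : N.Connected) {x y : V} (hxy : x ≠ y) : 0 < N.dc x y := by
  obtain ⟨v, hv, -⟩ := N.exists_isEnergyMinimizer hxy
  rw [hv.dc_eq hconn]
  exact inv_pos.mpr (hv.energyR_pos hconn)

/-- With `v`, `w`, `w'` the energy minimizers of `(x, y)`, `(x, z)`, `(z, y)`, reciprocity gives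
`(1 - v z) E(w) ≤ E(v)` and `v z E(w') ≤ E(v)`, because `w y ≥ 0` and `w' x ≤ 1`; adding
`(1 - v z) / E(v) ≤ 1 / E(w)` and `v z / E(v) ≤ 1 / E(w')` is the triangle inequality. -/
lemma dc_triangle (hconn : N.Connected) (x y z : V) : N.dc x y ≤ N.dc x z + N.dc z y := by
  rcases eq_or_ne x y with rfl | hxy
  · rw [dc_self]
    exact add_nonneg (N.dc_nonneg hconn x z) (N.dc_nonneg hconn z x)
  rcases eq_or_ne x z with rfl | hxz
  · rw [dc_self, zero_add]
  rcases eq_or_ne z y with rfl | hzy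
  · rw [dc_self, add_zero]
  obtain ⟨v, hv, -⟩ := N.exists_isEnergyMinimizer hxy
  obtain ⟨w, hw, hw01⟩ := N.exists_isEnergyMinimizer hxz
  obtain ⟨w', hw', hw'01⟩ := N.exists_isEnergyMinimizer hzy
  have hv0 := hv.energyR_pos hconn
  have hw0 := hw.energyR_pos hconn
  have hw'0 := hw'.energyR_pos hconn
  have h₁ := hv.reciprocity hw
  have h₂ := hv.reciprocity hw'
  rw [hv.apply_left, hw.apply_left] at h₁
  rw [hv.apply_right, hw'.apply_right] at h₂
  have h₁' : (1 - v z) / N.energyR v v ≤ (N.energyR w w)⁻¹ := by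
    rw [div_le_iff₀ hv0, ← div_eq_inv_mul, le_div_iff₀ hw0]
    nlinarith [(hw01 y).1]
  have h₂' : (v z - 0) / N.energyR v v ≤ (N.energyR w' w')⁻¹ := by
    rw [div_le_iff₀ hv0, ← div_eq_inv_mul, le_div_iff₀ hw'0]
    nlinarith [(hw'01 x).2]
  rw [hv.dc_eq hconn, hw.dc_eq hconn, hw'.dc_eq hconn]
  calc (N.energyR v v)⁻¹ = (1 - v z) / N.energyR v v + (v z - 0) / N.energyR v v := by
        field_simp; ring
    _ ≤ _ := add_le_add h₁' h₂'

end Network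

theorem stmt_17_general {V : Type*} (N : Network V) (hconn : N.Connected) :
    (∀ x y : V, BddAbove (N.distSet x y)) ∧
    (∀ x y : V, N.dc x y = N.dc y x) ∧
    (∀ x y : V, N.dc x y = 0 ↔ x = y) ∧
    (∀ x y z : V, N.dc x y ≤ N.dc x z + N.dc z y) :=
  ⟨N.bddAbove_distSet hconn, N.dc_comm,
    fun x y => ⟨fun h => by_contra fun hxy => (N.dc_pos hconn hxy).ne' h,
      by rintro rfl; exact N.dc_self x⟩,
    N.dc_triangle hconn⟩

/-- On a connected network, `d_c` is a metric on `V`: the defining supremum is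
finite (the set is bounded above), `d_c` is symmetric, vanishes exactly on the diagonal, and
satisfies the triangle inequality. -/
theorem stmt_17 {V : Type*} [Countable V] (N : Network V) (hconn : N.Connected) :
    (∀ x y : V, BddAbove (N.distSet x y)) ∧
    (∀ x y : V, N.dc x y = N.dc y x) ∧
    (∀ x y : V, N.dc x y = 0 ↔ x = y) ∧
    (∀ x y z : V, N.dc x y ≤ N.dc x z + N.dc z y) :=
  stmt_17_general N hconn
end

section
/- Let (V,E,c) be a connected network with V infinite, and Δ the associated graph Laplacian. If ξ : V → ℂ is square-summable (∑_{x∈V} |ξ(x)|² < ∞) and harmonic, i.e. (Δξ)(x) = 0 for every x ∈ V, then ξ = 0. In other words, the ℓ² kernel of the graph Laplacian on an infinite connected network is trivial. -/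
/-!
A square-summable function tends to `0` along the cofinite filter, so if `ξ ≠ 0` then `‖ξ‖`
attains a positive global maximum. At a maximum `x`, `Δξ(x) = 0` exhibits `ξ x` as a weighted
average of the values at its neighbors, none of larger modulus; pairing with `ξ x` shows that all
neighbors take the value `ξ x`. By connectedness `‖ξ‖` is then a positive constant, which is not
square-summable on an infinite set.
-/

open Filter Topology

theorem Filter.Tendsto.exists_forall_ge_of_lt {α β : Type*} [LinearOrder β] [TopologicalSpace β]
    [ClosedIciTopology β] {f : α → β} {b : β} (hf : Tendsto f cofinite (𝓝 b)) {x₀ : α}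
    (hx₀ : b < f x₀) : ∃ x, ∀ y, f y ≤ f x := by
  have hfin : {y | f x₀ ≤ f y}.Finite := by
    simpa only [not_lt] using eventually_cofinite.1 (hf.eventually (Iio_mem_nhds hx₀))
  obtain ⟨x, hx, hmax⟩ := Set.exists_max_image _ f hfin ⟨x₀, le_rfl⟩
  refine ⟨x, fun y => ?_⟩
  rcases le_or_gt (f x₀) (f y) with hy | hy
  · exact hmax y hy
  · exact hy.le.trans hx

theorem norm_sub_sq_le_two_mul_inner_sub {E : Type*} [NormedAddCommGroup E]
    [InnerProductSpace ℝ E] {a b : E} (hb : ‖b‖ ≤ ‖a‖) :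
    ‖a - b‖ ^ 2 ≤ 2 * inner ℝ a (a - b) := by
  have hsq : ‖b‖ ^ 2 ≤ ‖a‖ ^ 2 := pow_le_pow_left₀ (norm_nonneg b) hb 2
  rw [norm_sub_sq_real, inner_sub_right, real_inner_self_eq_norm_sq]
  linarith

theorem eq_of_sum_smul_sub_eq_zero_of_norm_le {ι E : Type*} [NormedAddCommGroup E]
    [InnerProductSpace ℝ E] {s : Finset ι} {w : ι → ℝ} {a : E} {b : ι → E}
    (hw : ∀ i ∈ s, 0 ≤ w i) (hb : ∀ i ∈ s, ‖b i‖ ≤ ‖a‖)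
    (hsum : ∑ i ∈ s, w i • (a - b i) = 0) {i : ι} (hi : i ∈ s) (hwi : 0 < w i) :
    b i = a := by
  have hterm_nonneg : ∀ j ∈ s, 0 ≤ w j * ‖a - b j‖ ^ 2 := fun j hj =>
    mul_nonneg (hw j hj) (sq_nonneg _)
  have henergy : ∑ j ∈ s, w j * ‖a - b j‖ ^ 2 ≤ 0 :=
    calc ∑ j ∈ s, w j * ‖a - b j‖ ^ 2
        ≤ ∑ j ∈ s, w j * (2 * inner ℝ a (a - b j)) :=
          Finset.sum_le_sum fun j hj =>
            mul_le_mul_of_nonneg_left (norm_sub_sq_le_two_mul_inner_sub (hb j hj)) (hw j hj)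
      _ = 2 * inner ℝ a (∑ j ∈ s, w j • (a - b j)) := by
          simp only [inner_sum, real_inner_smul_right, Finset.mul_sum]
          exact Finset.sum_congr rfl fun j _ => by ring
      _ = 0 := by rw [hsum, inner_zero_right, mul_zero]
  have hi_zero : w i * ‖a - b i‖ ^ 2 = 0 :=
    (Finset.sum_eq_zero_iff_of_nonneg hterm_nonneg).1
      (le_antisymm henergy (Finset.sum_nonneg hterm_nonneg)) i hi
  rw [mul_eq_zero, sq_eq_zero_iff, norm_eq_zero, sub_eq_zero] at hi_zero
  exact (hi_zero.resolve_left hwi.ne').symm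

namespace Network

variable {V : Type*} (N : Network V)

theorem lap_eq_sum (u : V → ℂ) (x : V) :
    N.lap u x = ∑ y ∈ (N.nbhd_finite x).toFinset, (N.c x y : ℂ) * (u x - u y) := by
  refine tsum_eq_sum fun y hy => ?_
  rw [N.c_eq_zero x y (by simpa using hy), Complex.ofReal_zero, zero_mul]

theorem eq_of_adj_of_lap_eq_zero_of_forall_norm_le {ξ : V → ℂ} {x : V}
    (hharm : N.lap ξ x = 0) (hmax : ∀ z, ‖ξ z‖ ≤ ‖ξ x‖) {y : V} (hxy : N.adj x y) :
    ξ y = ξ x := by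
  rw [lap_eq_sum] at hharm
  simp only [← Complex.real_smul] at hharm
  refine eq_of_sum_smul_sub_eq_zero_of_norm_le (fun z hz => ?_) (fun z _ => hmax z) hharm
    (by simpa using hxy) (N.c_pos x y hxy)
  exact (N.c_pos x z (by simpa using hz)).le

theorem Connected.mem_of_adj_closed {N : Network V} (hconn : N.Connected) {S : Set V}
    (hS : ∀ x y, N.adj x y → x ∈ S → y ∈ S) {x : V} (hx : x ∈ S) (y : V) : y ∈ S := by
  obtain ⟨n, p, rfl, rfl, hpath⟩ := hconn x y
  suffices ∀ i ≤ n, p i ∈ S from this n le_rfl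
  intro i
  induction i with
  | zero => exact fun _ => hx
  | succ i ih => exact fun hi => hS _ _ (hpath i hi) (ih (Nat.le_of_succ_le hi))

end Network

theorem stmt_19_general {V : Type*} [Infinite V] (N : Network V) (hconn : N.Connected)
    (ξ : V → ℂ) (hl2 : Summable fun x : V => ‖ξ x‖ ^ 2)
    (hharm : ∀ x : V, N.lap ξ x = 0) :
    ξ = 0 := by
  by_contra hne
  obtain ⟨x₀, hx₀⟩ := Function.ne_iff.1 hne
  have hpos : 0 < ‖ξ x₀‖ ^ 2 := pow_pos (norm_pos_iff.2 hx₀) 2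
  obtain ⟨x, hx⟩ := hl2.tendsto_cofinite_zero.exists_forall_ge_of_lt hpos
  let maximizers : Set V := {x | ∀ z, ‖ξ z‖ ≤ ‖ξ x‖}
  have hx_max : x ∈ maximizers := fun z =>
    (pow_le_pow_iff_left₀ (norm_nonneg _) (norm_nonneg _) two_ne_zero).1 (hx z)
  have hall_max : ∀ y, y ∈ maximizers := hconn.mem_of_adj_closed
    (fun y z hyz hy w => by
      rw [N.eq_of_adj_of_lap_eq_zero_of_forall_norm_le (hharm y) hy hyz]
      exact hy w) hx_max
  have hconst : (fun y => ‖ξ y‖ ^ 2) = fun _ => ‖ξ x‖ ^ 2 :=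
    funext fun y => by rw [le_antisymm (hx_max y) (hall_max y x)]
  rw [hconst] at hl2
  have : Finite V := Finite.of_summable_const (hpos.trans_le (hx x₀)) hl2
  exact not_finite V

/-- On an infinite connected network, the `ℓ²` kernel of the graph Laplacian
is trivial: if `ξ : V → ℂ` is square-summable and harmonic (`(Δξ)(x) = 0` for every `x`), then
`ξ = 0`. -/
theorem stmt_19 {V : Type*} [Countable V] [Infinite V] (N : Network V) (hconn : N.Connected)
    (ξ : V → ℂ) (hl2 : Summable fun x : V => ‖ξ x‖ ^ 2)
    (hharm : ∀ x : V, N.lap ξ x = 0) :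
    ξ = 0 :=
  stmt_19_general N hconn ξ hl2 hharm
end
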